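/- Let A₁, A₂ be bounded operators with closed range on a complex Hilbert space H. Then for all unit vectors u, v, |⟨(A₁+A₂)u, v⟩|² ≤ ⟨(A₁*A₁ + A₂*A₂)u,u⟩ · ⟨(A₁A₁† + A₂A₂†)v,v⟩. -/
import Mathlib


open scoped InnerProductSpace
open ContinuousLinearMap

theorem stmt_18 {H : Type*} [NormedAddCommGroup H] [InnerProductSpace ℂ H]
    [CompleteSpace H] (A₁ Ad₁ A₂ Ad₂ : H →L[ℂ] H)
    (hran₁ : IsClosed (Set.range A₁)) (hran₂ : IsClosed (Set.range A₂))
    (h11 : A₁ * Ad₁ * A₁ = A₁) (h12 : Ad₁ * A₁ * Ad₁ = Ad₁)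
    (h13 : adjoint (A₁ * Ad₁) = A₁ * Ad₁) (h14 : adjoint (Ad₁ * A₁) = Ad₁ * A₁)
    (h21 : A₂ * Ad₂ * A₂ = A₂) (h22 : Ad₂ * A₂ * Ad₂ = Ad₂)
    (h23 : adjoint (A₂ * Ad₂) = A₂ * Ad₂) (h24 : adjoint (Ad₂ * A₂) = Ad₂ * A₂)
    (u v : H) (hu : ‖u‖ = 1) (hv : ‖v‖ = 1) :
    ‖⟪(A₁ + A₂) u, v⟫_ℂ‖ ^ 2 ≤
      (⟪(adjoint A₁ * A₁ + adjoint A₂ * A₂) u, u⟫_ℂ).re *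
        (⟪(A₁ * Ad₁ + A₂ * Ad₂) v, v⟫_ℂ).re := by
  set P₁ := A₁ * Ad₁ with hP₁
  set P₂ := A₂ * Ad₂ with hP₂
  -- ⟪Aᵢ u, v⟫ = ⟪Aᵢ u, Pᵢ v⟫
  have key1 : ⟪A₁ u, v⟫_ℂ = ⟪A₁ u, P₁ v⟫_ℂ := by
    conv_lhs => rw [show A₁ u = P₁ (A₁ u) by
      rw [← ContinuousLinearMap.comp_apply, ← ContinuousLinearMap.mul_def, h11]]
    conv_rhs => rw [← h13, adjoint_inner_right]
  have key2 : ⟪A₂ u, v⟫_ℂ = ⟪A₂ u, P₂ v⟫_ℂ := by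
    conv_lhs => rw [show A₂ u = P₂ (A₂ u) by
      rw [← ContinuousLinearMap.comp_apply, ← ContinuousLinearMap.mul_def, h21]]
    conv_rhs => rw [← h23, adjoint_inner_right]
  -- ⟪Pᵢ v, v⟫.re = ‖Pᵢ v‖^2
  have proj1 : (⟪P₁ v, v⟫_ℂ).re = ‖P₁ v‖ ^ 2 := by
    have idem : P₁ (P₁ v) = P₁ v := by
      rw [hP₁]
      rw [← ContinuousLinearMap.comp_apply, ← ContinuousLinearMap.mul_def]
      rw [show A₁ * Ad₁ * (A₁ * Ad₁) = A₁ * Ad₁ * A₁ * Ad₁ by rw [← mul_assoc], h11]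
    calc (⟪P₁ v, v⟫_ℂ).re = (⟪P₁ (P₁ v), v⟫_ℂ).re := by rw [idem]
      _ = (⟪P₁ v, adjoint P₁ v⟫_ℂ).re := by rw [adjoint_inner_right]
      _ = (⟪P₁ v, P₁ v⟫_ℂ).re := by rw [h13]
      _ = ‖P₁ v‖ ^ 2 := by
          rw [inner_self_eq_norm_sq_to_K]; norm_cast
  have proj2 : (⟪P₂ v, v⟫_ℂ).re = ‖P₂ v‖ ^ 2 := by
    have idem : P₂ (P₂ v) = P₂ v := by
      rw [hP₂]
      rw [← ContinuousLinearMap.comp_apply, ← ContinuousLinearMap.mul_def]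
      rw [show A₂ * Ad₂ * (A₂ * Ad₂) = A₂ * Ad₂ * A₂ * Ad₂ by rw [← mul_assoc], h21]
    calc (⟪P₂ v, v⟫_ℂ).re = (⟪P₂ (P₂ v), v⟫_ℂ).re := by rw [idem]
      _ = (⟪P₂ v, adjoint P₂ v⟫_ℂ).re := by rw [adjoint_inner_right]
      _ = (⟪P₂ v, P₂ v⟫_ℂ).re := by rw [h23]
      _ = ‖P₂ v‖ ^ 2 := by
          rw [inner_self_eq_norm_sq_to_K]; norm_cast
  -- norms of A_i u
  have na1 : (⟪(adjoint A₁ * A₁) u, u⟫_ℂ).re = ‖A₁ u‖ ^ 2 := by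
    rw [ContinuousLinearMap.mul_apply, adjoint_inner_left,
      inner_self_eq_norm_sq_to_K]
    norm_cast
  have na2 : (⟪(adjoint A₂ * A₂) u, u⟫_ℂ).re = ‖A₂ u‖ ^ 2 := by
    rw [ContinuousLinearMap.mul_apply, adjoint_inner_left,
      inner_self_eq_norm_sq_to_K]
    norm_cast
  have expand_lhs : ⟪(A₁ + A₂) u, v⟫_ℂ = ⟪A₁ u, P₁ v⟫_ℂ + ⟪A₂ u, P₂ v⟫_ℂ := by
    rw [ContinuousLinearMap.add_apply, inner_add_left, key1, key2]
  have expand_r1 : (⟪(adjoint A₁ * A₁ + adjoint A₂ * A₂) u, u⟫_ℂ).re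
      = ‖A₁ u‖ ^ 2 + ‖A₂ u‖ ^ 2 := by
    rw [ContinuousLinearMap.add_apply, inner_add_left, Complex.add_re, na1, na2]
  have expand_r2 : (⟪(A₁ * Ad₁ + A₂ * Ad₂) v, v⟫_ℂ).re
      = ‖P₁ v‖ ^ 2 + ‖P₂ v‖ ^ 2 := by
    rw [ContinuousLinearMap.add_apply, inner_add_left, Complex.add_re, proj1, proj2]
  rw [expand_lhs, expand_r1, expand_r2]
  have cs1 : ‖⟪A₁ u, P₁ v⟫_ℂ‖ ≤ ‖A₁ u‖ * ‖P₁ v‖ := norm_inner_le_norm _ _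
  have cs2 : ‖⟪A₂ u, P₂ v⟫_ℂ‖ ≤ ‖A₂ u‖ * ‖P₂ v‖ := norm_inner_le_norm _ _
  have tri : ‖⟪A₁ u, P₁ v⟫_ℂ + ⟪A₂ u, P₂ v⟫_ℂ‖ ≤ ‖A₁ u‖ * ‖P₁ v‖ + ‖A₂ u‖ * ‖P₂ v‖ :=
    (norm_add_le _ _).trans (add_le_add cs1 cs2)
  have hnn : (0:ℝ) ≤ ‖⟪A₁ u, P₁ v⟫_ℂ + ⟪A₂ u, P₂ v⟫_ℂ‖ := norm_nonneg _
  nlinarith [sq_nonneg (‖A₁ u‖ * ‖P₂ v‖ - ‖A₂ u‖ * ‖P₁ v‖), norm_nonneg (A₁ u),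
    norm_nonneg (A₂ u), norm_nonneg (P₁ v), norm_nonneg (P₂ v),
    mul_nonneg (norm_nonneg (A₁ u)) (norm_nonneg (P₁ v)),
    mul_nonneg (norm_nonneg (A₂ u)) (norm_nonneg (P₂ v))]
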